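/- Let k ≥ 2 be an integer and let (λ_n)_{n∈ℤ} be a bounded sequence of positive real numbers satisfying λ_n^k = λ_n · λ_{n+1} · · · λ_{n+k−1} (the product of the k consecutive terms starting at λ_n) for all n ∈ ℤ. Then (λ_n)_{n∈ℤ} is a constant sequence; in particular, inf_{n∈ℤ} λ_n > 0. -/

import Mathlib

/-!
Pass to logarithms: `a n = log λ_n` is bounded above and `a n` is the mean of
`a (n + 1), …, a (n + K)` with `K = k - 1 ≥ 1`. For such a sequence the weighted window sum
`∑_{j<K} ∑_{i≤j} a (N + i)` does not depend on `N`. Applied to the deficit `d = sup a - a ≥ 0`,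
this window sum is squeezed between `d N` and `K (K + 1) d N`, giving the Harnack inequality
`d n ≤ K (K + 1) d m` for all `n, m`. Since `d` comes arbitrarily close to `0`, it vanishes.
-/

open Finset

def IsMeanOfNext (K : ℕ) (a : ℤ → ℝ) : Prop :=
  ∀ n : ℤ, (K : ℝ) * a n = ∑ i ∈ range K, a (n + i + 1)

theorem isMeanOfNext_of_mul_eq_sum {K : ℕ} {a : ℤ → ℝ}
    (h : ∀ n : ℤ, ((K + 1 : ℕ) : ℝ) * a n = ∑ i ∈ range (K + 1), a (n + i)) :
    IsMeanOfNext K a := by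
  intro n
  have hn := h n
  rw [sum_range_succ'] at hn
  push_cast at hn
  simp only [← add_assoc, add_zero] at hn
  linarith

/-- This is `∑_{i<K} (K - i) a (N + i)`; the weights are the coefficients of
`(K - x - ⋯ - x^K) / (1 - x)`, which makes it shift-invariant along solutions. -/
def windowPotential (K : ℕ) (a : ℤ → ℝ) (N : ℤ) : ℝ :=
  ∑ j ∈ range K, ∑ i ∈ range (j + 1), a (N + i)

theorem le_windowPotential {K : ℕ} {a : ℤ → ℝ} (hK : 1 ≤ K) (h0 : ∀ n, 0 ≤ a n) (N : ℤ) :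
    a N ≤ windowPotential K a N := by
  have hterm : ∑ i ∈ range (0 + 1), a (N + i) = a N := by simp
  rw [windowPotential, ← hterm]
  exact single_le_sum (f := fun j ↦ ∑ i ∈ range (j + 1), a (N + i))
    (fun j _ ↦ sum_nonneg fun i _ ↦ h0 _) (mem_range.mpr hK)

namespace IsMeanOfNext

variable {K : ℕ} {a : ℤ → ℝ}

theorem const_sub (h : IsMeanOfNext K a) (s : ℝ) : IsMeanOfNext K (fun n ↦ s - a n) := by
  intro n
  simp only [sum_sub_distrib, sum_const, card_range, nsmul_eq_mul, mul_sub, h n]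

theorem windowPotential_periodic (h : IsMeanOfNext K a) :
    Function.Periodic (windowPotential K a) 1 := by
  intro N
  have shift (j : ℕ) : ∑ i ∈ range (j + 1), a (N + 1 + i) =
      ∑ i ∈ range (j + 1), a (N + i) + a (N + j + 1) - a N := by
    rw [sum_range_succ, sum_range_succ']
    push_cast
    simp only [add_zero, add_right_comm N 1, ← add_assoc]
    ring
  simp only [windowPotential, shift, sum_sub_distrib, sum_add_distrib, ← h N, sum_const,
    card_range, nsmul_eq_mul]
  ring

theorem windowPotential_eq (h : IsMeanOfNext K a) (m n : ℤ) :
    windowPotential K a m = windowPotential K a n := by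
  obtain ⟨d, rfl⟩ : ∃ d : ℤ, m = n + d := ⟨m - n, by ring⟩
  simpa using h.windowPotential_periodic.int_mul d n

theorem windowPotential_le (h : IsMeanOfNext K a) (h0 : ∀ n, 0 ≤ a n) (N : ℤ) :
    windowPotential K a N ≤ K * (K + 1) * a N := by
  have hfull : ∑ i ∈ range (K + 1), a (N + i) = (K + 1) * a N := by
    rw [sum_range_succ']
    push_cast
    simp only [← add_assoc, ← h N, add_zero]
    ring
  calc windowPotential K a N ≤ ∑ _j ∈ range K, ∑ i ∈ range (K + 1), a (N + i) := by
        refine sum_le_sum fun j hj ↦ sum_le_sum_of_subset_of_nonneg ?_ fun i _ _ ↦ h0 _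
        exact range_subset_range.mpr (Nat.succ_le_succ (mem_range.mp hj).le)
    _ = K * (K + 1) * a N := by rw [sum_const, card_range, nsmul_eq_mul, hfull]; ring

theorem le_mul_of_nonneg (h : IsMeanOfNext K a) (hK : 1 ≤ K) (h0 : ∀ n, 0 ≤ a n) (m n : ℤ) :
    a n ≤ K * (K + 1) * a m :=
  calc a n ≤ windowPotential K a n := le_windowPotential hK h0 n
    _ = windowPotential K a m := h.windowPotential_eq n m
    _ ≤ K * (K + 1) * a m := h.windowPotential_le h0 m

theorem eq_iSup (h : IsMeanOfNext K a) (hK : 1 ≤ K) (hbdd : BddAbove (Set.range a)) (n : ℤ) :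
    a n = ⨆ m, a m := by
  set s := ⨆ m, a m
  have hle (m : ℤ) : a m ≤ s := le_ciSup hbdd m
  have hC : (0 : ℝ) < K * (K + 1) := by positivity
  have harnack := (h.const_sub s).le_mul_of_nonneg hK (fun m ↦ sub_nonneg.mpr (hle m))
  have hs : s ≤ s - (s - a n) / (K * (K + 1)) := by
    refine ciSup_le fun m ↦ ?_
    rw [le_sub_comm, div_le_iff₀' hC]
    exact harnack m n
  have : s - a n ≤ 0 * (K * (K + 1)) := (div_le_iff₀ hC).mp (by linarith)
  linarith [hle n]

end IsMeanOfNext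

/-- A bounded sequence `(λ_n)_{n∈ℤ}` of positive reals satisfying
`λ_n^k = λ_n · λ_{n+1} ⋯ λ_{n+k−1}` for all `n` is constant; in particular it
is bounded below away from zero. -/
theorem bounded_geometric_mean_recurrence_constant (k : ℕ) (hk : 2 ≤ k)
    (l : ℤ → ℝ) (hpos : ∀ n : ℤ, 0 < l n)
    (hbdd : ∃ C : ℝ, ∀ n : ℤ, l n ≤ C)
    (hrec : ∀ n : ℤ, l n ^ k = ∏ i ∈ Finset.range k, l (n + (i : ℤ))) :
    (∀ m n : ℤ, l m = l n) ∧ ∃ c : ℝ, 0 < c ∧ ∀ n : ℤ, c ≤ l n := by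
  obtain ⟨K, rfl⟩ : ∃ K, k = K + 1 := ⟨k - 1, by omega⟩
  obtain ⟨C, hC⟩ := hbdd
  set a : ℤ → ℝ := fun n ↦ Real.log (l n)
  have hlog (n : ℤ) : ((K + 1 : ℕ) : ℝ) * a n = ∑ i ∈ range (K + 1), a (n + i) := by
    rw [← Real.log_pow, hrec n, Real.log_prod fun i _ ↦ (hpos _).ne']
  have hbddA : BddAbove (Set.range a) :=
    ⟨Real.log C, Set.forall_mem_range.mpr fun n ↦ Real.log_le_log (hpos n) (hC n)⟩
  have hconst := (isMeanOfNext_of_mul_eq_sum hlog).eq_iSup (by omega) hbddA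
  have hl (m n : ℤ) : l m = l n :=
    Real.log_injOn_pos (hpos m) (hpos n) ((hconst m).trans (hconst n).symm)
  exact ⟨hl, l 0, hpos 0, fun n ↦ (hl 0 n).le⟩
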